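/- For every integer d ≥ 1, every ε with 0 < ε < π²/2, and every x ∈ 𝕋^d, the Gaussian kernel satisfies (2πε)^{−d/2}·exp(−dist(x, 0)²/(2ε)) ≤ K_ε(x) ≤ 2^{d+1}·e^{5d}·(2πε)^{−d/2}·exp(−dist(x, 0)²/(2ε)), where dist(x,0) denotes the torus distance from x to the identity element 0 of 𝕋^d. -/

import Mathlib

open MeasureTheory Real

noncomputable section

instance : Fact ((0:ℝ) < 2 * Real.pi) := ⟨by positivity⟩

/-- The flat torus `𝕋^d = ℝ^d / (2πℤ)^d`, as a product of additive circles. -/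
abbrev Torus (d : ℕ) : Type := Fin d → AddCircle (2 * Real.pi)

namespace Torus

variable {d : ℕ}

/-- The canonical lift of a torus point to `ℝ^d` (componentwise representative in `[0, 2π)`). -/
noncomputable def lift (x : Torus d) : Fin d → ℝ :=
  fun i => (AddCircle.equivIco (2 * Real.pi) 0 (x i) : ℝ)

/-- The flat torus distance `dist(x,y) = min_{k ∈ ℤ^d} ‖x - y - 2πk‖` (Euclidean norm). -/
noncomputable def tdist (x y : Torus d) : ℝ :=
  ⨅ k : Fin d → ℤ, Real.sqrt (∑ i, (lift x i - lift y i - 2 * Real.pi * (k i)) ^ 2)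

/-- The Gaussian (heat) kernel `K_ε` on the torus. -/
noncomputable def gker (ε : ℝ) (x : Torus d) : ℝ :=
  (2 * Real.pi * ε) ^ (-(d : ℝ) / 2) *
    ∑' k : Fin d → ℤ,
      Real.exp (-(∑ i, (lift x i - 2 * Real.pi * (k i)) ^ 2) / (2 * ε))

/-- The cost function `c_ε(x,y) = -ε log K_ε(x - y)`. -/
noncomputable def cost (ε : ℝ) (x y : Torus d) : ℝ := -(ε * Real.log (gker ε (x - y)))

/-- The operator `𝒯_μ^ε[φ](y) = -ε log ∫ exp((φ(x) - c_ε(x,y))/ε) dμ(x)`. -/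
noncomputable def Tmap (ε : ℝ) (μ : Measure (Torus d)) (φ : Torus d → ℝ) (y : Torus d) : ℝ :=
  -(ε * Real.log (∫ x, Real.exp ((φ x - cost ε x y) / ε) ∂μ))

/-- The Schrödinger functional `I_{μ,ν}^ε[φ] = ∫ φ dμ + ∫ 𝒯_μ^ε[φ] dν`. -/
noncomputable def SchFun (ε : ℝ) (μ ν : Measure (Torus d)) (φ : Torus d → ℝ) : ℝ :=
  (∫ x, φ x ∂μ) + ∫ y, Tmap ε μ φ y ∂ν

/-- The Schrödinger functional `Ī_{μ,ν}^ε[ψ] = ∫ 𝒯_ν^ε[ψ] dμ + ∫ ψ dν`. -/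
noncomputable def SchFunBar (ε : ℝ) (μ ν : Measure (Torus d)) (ψ : Torus d → ℝ) : ℝ :=
  (∫ x, Tmap ε ν ψ x ∂μ) + ∫ y, ψ y ∂ν

/-- `(φ, ψ)` is a pair of Schrödinger potentials for `(μ, ν, ε)`. -/
structure IsSchrodingerPotentials (ε : ℝ) (μ ν : Measure (Torus d))
    (φ ψ : Torus d → ℝ) : Prop where
  cont_phi : Continuous φ
  cont_psi : Continuous ψ
  eq_psi : ψ = Tmap ε μ φ
  eq_phi : φ = Tmap ε ν ψ
  max_phi : ∀ g : Torus d → ℝ, Continuous g → SchFun ε μ ν g ≤ SchFun ε μ ν φ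
  max_psi : ∀ g : Torus d → ℝ, Continuous g → SchFunBar ε μ ν g ≤ SchFunBar ε μ ν ψ

/-- Variance of `f` under the probability measure `m`. -/
noncomputable def Var (m : Measure (Torus d)) (f : Torus d → ℝ) : ℝ :=
  ∫ x, (f x - ∫ y, f y ∂m) ^ 2 ∂m

/-- Oscillation `osc f = sup f - inf f`. -/
noncomputable def osc (f : Torus d → ℝ) : ℝ := (⨆ x, f x) - ⨅ x, f x

/-- `μ` has density `f` with respect to the Lebesgue (Haar) measure on the torus. -/
def HasDensity (μ : Measure (Torus d)) (f : Torus d → ℝ) : Prop :=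
  μ = (volume : Measure (Torus d)).withDensity (fun x => ENNReal.ofReal (f x))

end Torus

open Torus
namespace Torus

variable {d : ℕ}

/-- The probability measure `π_y[φ]`, with density
`exp((φ(x) - c_ε(x,y))/ε) / ∫ exp((φ(x') - c_ε(x',y))/ε) dμ(x')` with respect to `μ`. -/
noncomputable def piY (ε : ℝ) (μ : Measure (Torus d)) (φ : Torus d → ℝ) (y : Torus d) :
    Measure (Torus d) :=
  μ.withDensity fun x => ENNReal.ofReal
    (Real.exp ((φ x - cost ε x y) / ε) / ∫ x', Real.exp ((φ x' - cost ε x' y) / ε) ∂μ)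

/-- The probability measure `π^ν[φ] : A ↦ ∫ π_y[φ](A) dν(y)`. -/
noncomputable def piNu (ε : ℝ) (μ ν : Measure (Torus d)) (φ : Torus d → ℝ) :
    Measure (Torus d) :=
  ν.bind fun y => piY ε μ φ y

/-- The probability measure `γ_Q` on the torus, with density proportional to
`1_{B(x₀,r)}(x) exp(-dist(x₀,x)²/α)`. -/
noncomputable def gammaQ (x₀ : Torus d) (r α : ℝ) : Measure (Torus d) :=
  ((volume.withDensity fun x => ENNReal.ofReal
      (if tdist x₀ x < r then Real.exp (-(tdist x₀ x) ^ 2 / α) else 0)) Set.univ)⁻¹ •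
    (volume.withDensity fun x => ENNReal.ofReal
      (if tdist x₀ x < r then Real.exp (-(tdist x₀ x) ^ 2 / α) else 0))

/-- Normalized restriction `ν_Q(A) = ν(A ∩ Q) / ν(Q)`. -/
noncomputable def normRestrict (ν : Measure (Torus d)) (Q : Set (Torus d)) :
    Measure (Torus d) :=
  (ν Q)⁻¹ • ν.restrict Q

open Classical in
/-- Kullback–Leibler divergence: `KL(P‖Q) = ∫ log(dP/dQ) dP` if `P ≪ Q`, `+∞` otherwise. -/
noncomputable def KLdiv {α : Type*} [MeasurableSpace α] (P Q : Measure α) : EReal :=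
  if P ≪ Q then ((∫ x, Real.log ((P.rnDeriv Q x).toReal) ∂P : ℝ) : EReal) else ⊤

/-- Convolution with the Gaussian kernel: `(K_ε ∗ f)(x) = ∫ K_ε(x - y) f(y) dy`. -/
noncomputable def gconv (ε : ℝ) (f : Torus d → ℝ) (x : Torus d) : ℝ :=
  ∫ y, gker ε (x - y) * f y

/-- The measure `π_{μ,ε}` on `𝕋^d × 𝕋^d` given by `dπ_{μ,ε}(x,y) = K_ε(y - x) dy dμ(x)`. -/
noncomputable def piProd (ε : ℝ) (μ : Measure (Torus d)) : Measure (Torus d × Torus d) :=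
  (μ.prod (volume : Measure (Torus d))).withDensity fun p =>
    ENNReal.ofReal (gker ε (p.2 - p.1))

end Torus

/-!
Write `δ(t) = min t (2π - t)` for the distance from `t ∈ [0, 2π)` to `2πℤ`. Both the kernel and
`exp(-dist(x,0)²/(2ε)) = ∏ᵢ exp(-δ(xᵢ)²/(2ε))` factorize over coordinates, so it suffices to compare
the one-dimensional sums `Σₖ exp(-(t - 2πk)²/(2ε))` with `exp(-δ(t)²/(2ε))`. The term of the sum
nearest to `t` equals `exp(-δ(t)²/(2ε))`. When `8ε < (2π)²`, the `k`-th term is at most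
`e⁵ e^{-4|k|} exp(-δ(t)²/(2ε))`, and `Σₖ e^{-4|k|} ≤ 2`.
-/

open Set

theorem hasSum_prod_pi_fin {β : Type*} {n : ℕ} {f : Fin n → β → ℝ} {a : Fin n → ℝ}
    (hf0 : ∀ i b, 0 ≤ f i b) (hf : ∀ i, HasSum (f i) (a i)) :
    HasSum (fun k : Fin n → β => ∏ i, f i (k i)) (∏ i, a i) := by
  induction n with
  | zero => simp
  | succ n ih =>
    set g : (Fin n → β) → ℝ := fun k => ∏ i : Fin n, f i.succ (k i)
    have hg : HasSum g (∏ i : Fin n, a i.succ) := ih (fun i => hf0 i.succ) (fun i => hf i.succ)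
    have hg0 : 0 ≤ g := fun k => Finset.prod_nonneg fun i _ => hf0 _ _
    have hprod : HasSum (fun x : β × (Fin n → β) => f 0 x.1 * g x.2)
        (a 0 * ∏ i : Fin n, a i.succ) :=
      (hf 0).mul hg ((hf 0).summable.mul_of_nonneg hg.summable (hf0 0) hg0)
    rw [Fin.prod_univ_succ, ← (Fin.consEquiv fun _ => β).hasSum_iff]
    refine hprod.congr_fun fun k => ?_
    simp [g, Fin.prod_univ_succ]

theorem hasSum_pow_natAbs {r : ℝ} (h0 : 0 ≤ r) (h1 : r < 1) :
    HasSum (fun k : ℤ => r ^ k.natAbs) ((1 + r) / (1 - r)) := by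
  have hg := hasSum_geometric_of_lt_one h0 h1
  have hneg : ∀ n : ℕ, (-((n : ℤ) + 1)).natAbs = n + 1 := fun n => by omega
  have hsum := HasSum.of_nat_of_neg_add_one (f := fun k : ℤ => r ^ k.natAbs)
    (m := (1 - r)⁻¹) (m' := r * (1 - r)⁻¹) (by simpa using hg)
    (by simpa only [hneg, pow_succ'] using hg.mul_left r)
  convert hsum using 1
  field_simp [(sub_pos.2 h1).ne']

section PeriodizedGaussian

variable {p ε t : ℝ}

theorem exists_sq_sub_mul_eq_sq_min (t p : ℝ) : ∃ k : ℤ, (t - p * k) ^ 2 = min t (p - t) ^ 2 := by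
  rcases min_choice t (p - t) with h | h
  · exact ⟨0, by simp [h]⟩
  · exact ⟨1, by rw [h]; ring⟩

theorem sq_min_le_sq_sub_mul (ht : t ∈ Ico 0 p) (k : ℤ) :
    min t (p - t) ^ 2 ≤ (t - p * k) ^ 2 := by
  obtain ⟨ht0, htp⟩ := ht
  have hδ : 0 ≤ min t (p - t) := le_min ht0 (by linarith)
  rcases le_or_gt k 0 with hk | hk
  · have hk' : (k : ℝ) ≤ 0 := by exact_mod_cast hk
    exact pow_le_pow_left₀ hδ ((min_le_left _ _).trans (by nlinarith)) 2
  · have hk' : (1 : ℝ) ≤ k := by exact_mod_cast hk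
    rw [← neg_sq (t - p * k), neg_sub]
    exact pow_le_pow_left₀ hδ ((min_le_right _ _).trans (by nlinarith)) 2

theorem sq_min_add_le_sq_sub_mul (hε : 0 < ε) (hεp : 8 * ε < p ^ 2) (ht : t ∈ Ico 0 p) (k : ℤ) :
    min t (p - t) ^ 2 + 2 * ε * (4 * k.natAbs - 5) ≤ (t - p * k) ^ 2 := by
  have hnear := sq_min_le_sq_sub_mul ht k
  obtain ⟨ht0, htp⟩ := ht
  set δ := min t (p - t)
  have hδ : δ ^ 2 ≤ p ^ 2 / 4 := by
    have : 2 * δ ≤ p := by linarith [min_le_left t (p - t), min_le_right t (p - t)]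
    nlinarith [le_min ht0 (by linarith : 0 ≤ p - t)]
  obtain ⟨n, rfl | rfl⟩ := Int.eq_nat_or_neg k
  all_goals
    simp only [Int.natAbs_neg, Int.natAbs_natCast, Int.cast_neg, Int.cast_natCast] at hnear ⊢
  · rcases Nat.lt_or_ge n 2 with hn | hn
    · have : (n : ℝ) ≤ 1 := by exact_mod_cast Nat.le_of_lt_succ hn
      nlinarith [mul_pos hε (by linarith : (0 : ℝ) < 5 - 4 * n)]
    · have hn : (2 : ℝ) ≤ n := by exact_mod_cast hn
      have hfar : p ^ 2 * (n - 1) ^ 2 ≤ (t - p * n) ^ 2 := by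
        rw [← mul_pow, ← neg_sq (t - p * n), neg_sub]
        exact pow_le_pow_left₀ (by nlinarith) (by nlinarith) 2
      nlinarith [mul_le_mul_of_nonneg_right hεp.le (by linarith : (0 : ℝ) ≤ 4 * n - 5)]
  · rcases Nat.eq_zero_or_pos n with rfl | hn
    · norm_num at hnear ⊢; linarith
    · have hn : (1 : ℝ) ≤ n := by exact_mod_cast hn
      have hfar : p ^ 2 * n ^ 2 ≤ (t - p * -n) ^ 2 := by
        rw [← mul_pow]
        exact pow_le_pow_left₀ (by nlinarith) (by nlinarith) 2
      nlinarith [mul_le_mul_of_nonneg_right hεp.le (by linarith : (0 : ℝ) ≤ n - 1)]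

theorem exp_neg_sq_sub_mul_le (hε : 0 < ε) (hεp : 8 * ε < p ^ 2) (ht : t ∈ Ico 0 p) (k : ℤ) :
    exp (-(t - p * k) ^ 2 / (2 * ε)) ≤
      exp 5 * exp (-min t (p - t) ^ 2 / (2 * ε)) * exp (-4) ^ k.natAbs := by
  rw [← exp_nat_mul, ← exp_add, ← exp_add, exp_le_exp, ← sub_nonneg]
  have key := sq_min_add_le_sq_sub_mul hε hεp ht k
  have : 5 + -min t (p - t) ^ 2 / (2 * ε) + k.natAbs * -4 - -(t - p * k) ^ 2 / (2 * ε) =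
      ((t - p * k) ^ 2 - (min t (p - t) ^ 2 + 2 * ε * (4 * k.natAbs - 5))) / (2 * ε) := by
    field_simp
    ring
  rw [this]
  exact div_nonneg (by linarith) (by positivity)

theorem exists_hasSum_periodized_gaussian (hε : 0 < ε) (hεp : 8 * ε < p ^ 2) (ht : t ∈ Ico 0 p) :
    ∃ s, HasSum (fun k : ℤ => exp (-(t - p * k) ^ 2 / (2 * ε))) s ∧
      exp (-min t (p - t) ^ 2 / (2 * ε)) ≤ s ∧
      s ≤ 2 * exp 5 * exp (-min t (p - t) ^ 2 / (2 * ε)) := by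
  set E := exp (-min t (p - t) ^ 2 / (2 * ε))
  have hr : exp (-4) ≤ 1 / 5 := by
    rw [exp_neg, one_div]
    exact inv_anti₀ (by norm_num) (by linarith [add_one_le_exp 4])
  have hgeom := (hasSum_pow_natAbs (exp_pos (-4)).le (by linarith)).mul_left (exp 5 * E)
  have hsum : Summable fun k : ℤ => exp (-(t - p * k) ^ 2 / (2 * ε)) :=
    hgeom.summable.of_nonneg_of_le (fun _ => (exp_pos _).le) (exp_neg_sq_sub_mul_le hε hεp ht)
  refine ⟨_, hsum.hasSum, ?_, ?_⟩
  · obtain ⟨k, hk⟩ := exists_sq_sub_mul_eq_sq_min t p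
    calc E = exp (-(t - p * k) ^ 2 / (2 * ε)) := by rw [hk]
      _ ≤ _ := hsum.le_tsum k fun _ _ => (exp_pos _).le
  · calc _ ≤ exp 5 * E * ((1 + exp (-4)) / (1 - exp (-4))) :=
          hasSum_le (exp_neg_sq_sub_mul_le hε hεp ht) hsum.hasSum hgeom
      _ ≤ exp 5 * E * 2 := by
          gcongr
          rw [div_le_iff₀ (by linarith)]
          linarith
      _ = 2 * exp 5 * E := by ring

end PeriodizedGaussian

namespace Torus

variable {d : ℕ}

theorem lift_mem_Ico (x : Torus d) (i : Fin d) : lift x i ∈ Ico 0 (2 * π) := by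
  simpa [lift] using (AddCircle.equivIco (2 * π) 0 (x i)).2

theorem lift_zero : lift (0 : Torus d) = 0 := by
  ext i
  simpa [lift] using AddCircle.coe_equivIco_mk_apply (p := 2 * π) (0 : ℝ)

theorem sq_tdist_zero (x : Torus d) :
    tdist x 0 ^ 2 = ∑ i, min (lift x i) (2 * π - lift x i) ^ 2 := by
  suffices tdist x 0 = √(∑ i, min (lift x i) (2 * π - lift x i) ^ 2) by
    rw [this, sq_sqrt (by positivity)]
  simp only [tdist, lift_zero, Pi.zero_apply, sub_zero]
  refine le_antisymm ?_ (le_ciInf fun k => sqrt_le_sqrt <|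
    Finset.sum_le_sum fun i _ => sq_min_le_sq_sub_mul (lift_mem_Ico x i) (k i))
  choose k hk using fun i => exists_sq_sub_mul_eq_sq_min (lift x i) (2 * π)
  refine (ciInf_le ⟨0, ?_⟩ k).trans_eq (by simp only [hk])
  rintro _ ⟨k, rfl⟩
  positivity

theorem gker_eq_mul_tsum_prod (ε : ℝ) (x : Torus d) :
    gker ε x = (2 * π * ε) ^ (-(d : ℝ) / 2) *
      ∑' k : Fin d → ℤ, ∏ i, exp (-(lift x i - 2 * π * k i) ^ 2 / (2 * ε)) := by
  simp only [gker, ← exp_sum, ← Finset.sum_div, Finset.sum_neg_distrib]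

end Torus

theorem statement13_general (d : ℕ) (ε : ℝ) (hε0 : 0 < ε) (hε : ε < Real.pi ^ 2 / 2)
    (x : Torus d) :
    (2 * Real.pi * ε) ^ (-(d : ℝ) / 2) * Real.exp (-(tdist x 0) ^ 2 / (2 * ε)) ≤ gker ε x ∧
      gker ε x ≤ 2 ^ (d + 1) * Real.exp (5 * d) *
        ((2 * Real.pi * ε) ^ (-(d : ℝ) / 2) * Real.exp (-(tdist x 0) ^ 2 / (2 * ε))) := by
  set E : Fin d → ℝ := fun i => exp (-min (lift x i) (2 * π - lift x i) ^ 2 / (2 * ε))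
  have hεπ : 8 * ε < (2 * π) ^ 2 := by nlinarith
  choose s hs hEs hsE using fun i =>
    exists_hasSum_periodized_gaussian hε0 hεπ (Torus.lift_mem_Ico x i)
  have hker : gker ε x = (2 * π * ε) ^ (-(d : ℝ) / 2) * ∏ i, s i := by
    rw [Torus.gker_eq_mul_tsum_prod, (hasSum_prod_pi_fin (fun _ _ => (exp_pos _).le) hs).tsum_eq]
  have hdist : exp (-tdist x 0 ^ 2 / (2 * ε)) = ∏ i, E i := by
    simp only [E, Torus.sq_tdist_zero, ← exp_sum, ← Finset.sum_div, Finset.sum_neg_distrib]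
  rw [hker, hdist]
  constructor
  · gcongr with i
    exact hEs i
  · calc (2 * π * ε) ^ (-(d : ℝ) / 2) * ∏ i, s i
        ≤ (2 * π * ε) ^ (-(d : ℝ) / 2) * ∏ i, (2 * exp 5 * E i) := by
          gcongr with i
          · exact fun i _ => (hEs i).trans' (exp_pos _).le
          · exact hsE i
      _ = 2 ^ d * exp (5 * d) * ((2 * π * ε) ^ (-(d : ℝ) / 2) * ∏ i, E i) := by
          rw [Finset.prod_mul_distrib, Finset.prod_const, Finset.card_univ, Fintype.card_fin,
            mul_pow, ← exp_nat_mul, mul_comm (d : ℝ)]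
          ring
      _ ≤ 2 ^ (d + 1) * exp (5 * d) * ((2 * π * ε) ^ (-(d : ℝ) / 2) * ∏ i, E i) := by
          gcongr
          · norm_num
          · omega

/-- uniform bounds on the Gaussian kernel: for `0 < ε < π²/2`,
`(2πε)^{-d/2}·exp(-dist(x,0)²/(2ε)) ≤ K_ε(x) ≤ 2^{d+1}·e^{5d}·(2πε)^{-d/2}·exp(-dist(x,0)²/(2ε))`. -/
theorem statement13 (d : ℕ) (hd : 1 ≤ d) (ε : ℝ) (hε0 : 0 < ε) (hε : ε < Real.pi ^ 2 / 2)
    (x : Torus d) :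
    (2 * Real.pi * ε) ^ (-(d : ℝ) / 2) * Real.exp (-(tdist x 0) ^ 2 / (2 * ε)) ≤ gker ε x ∧
      gker ε x ≤ 2 ^ (d + 1) * Real.exp (5 * d) *
        ((2 * Real.pi * ε) ^ (-(d : ℝ) / 2) * Real.exp (-(tdist x 0) ^ 2 / (2 * ε))) :=
  statement13_general d ε hε0 hε x
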